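/- arXiv:math/9812015 — 4 statements merged into one kernel-verified Lean document; each statement's English description precedes it below -/
import Mathlib

section
/- Let n ≥ 1 and let N : Fin (n+1) → ℕ be nonnegative integers satisfying ∑_{k=0}^{n} (-1)^k · N_k · k^l = 0 for all 0 ≤ l < n (convention 0^0 = 1). If N_0 ≥ 1, then N_k = N_0 · (n choose k) for all k; in particular N_n ≥ 1. -/
open Polynomial Finset

lemma alt_sum_poly (n : ℕ) : ∀ p : Polynomial ℚ, p.degree < n →
    ∑ k ∈ Finset.range (n+1), (-1:ℚ)^k * (n.choose k) * p.eval (k:ℚ) = 0 := by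
  induction n with
  | zero =>
    intro p hp
    have : p = 0 := Polynomial.degree_eq_bot.mp (Nat.WithBot.lt_zero_iff.mp (by simpa using hp))
    simp [this]
  | succ n ih =>
    intro p hp
    by_cases hp0 : p = 0
    · simp [hp0]
    set q : Polynomial ℚ := p - p.comp (X + C 1) with hq
    have hdq : q.degree < n := by
      by_cases hc : p.natDegree = 0
      · have hcomp : p.comp (X + C 1) = p := by
          obtain ⟨c, rfl⟩ := Polynomial.natDegree_eq_zero.mp hc
          simp
        rw [hq, hcomp, sub_self]
        simp only [Polynomial.degree_zero]
        exact WithBot.bot_lt_coe n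
      · have hX : (X + C (1:ℚ)).natDegree = 1 := Polynomial.natDegree_X_add_C 1
        have hlc : p.leadingCoeff = (p.comp (X + C 1)).leadingCoeff := by
          rw [Polynomial.leadingCoeff_comp (by rw [hX]; exact one_ne_zero),
            (Polynomial.monic_X_add_C (1:ℚ)).leadingCoeff]
          ring
        have hpc0 : p.comp (X + C 1) ≠ 0 := by
          intro h
          apply hp0
          have := hlc
          rw [h, Polynomial.leadingCoeff_zero] at this
          exact Polynomial.leadingCoeff_eq_zero.mp this
        have hdc : (p.comp (X + C 1)).degree = p.degree := by
          rw [Polynomial.degree_eq_natDegree hpc0, Polynomial.degree_eq_natDegree hp0,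
            Polynomial.natDegree_comp, hX, mul_one]
        have h1 : q.degree < p.degree := Polynomial.degree_sub_lt hdc.symm hp0 hlc
        have hnd : p.natDegree < n + 1 := (Polynomial.natDegree_lt_iff_degree_lt hp0).mpr hp
        have h2 : p.degree ≤ n := by
          rw [Polynomial.degree_eq_natDegree hp0]
          exact_mod_cast Nat.lt_succ_iff.mp hnd
        exact lt_of_lt_of_le h1 h2
    have hqe : ∀ k : ℕ, q.eval (k:ℚ) = p.eval (k:ℚ) - p.eval ((k:ℚ)+1) := by
      intro k; simp [hq, Polynomial.eval_comp]
    set S1 := ∑ k ∈ Finset.range (n+1), (-1:ℚ)^k * (n.choose k) * p.eval (k:ℚ) with hS1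
    set S2 := ∑ k ∈ Finset.range (n+1), (-1:ℚ)^k * (n.choose k) * p.eval ((k:ℚ)+1) with hS2
    have A : ∑ k ∈ Finset.range (n+1), (-1:ℚ)^k * (n.choose k) * q.eval (k:ℚ) = S1 - S2 := by
      rw [hS1, hS2, ← Finset.sum_sub_distrib]
      refine Finset.sum_congr rfl fun k _ => ?_
      rw [hqe]; ring
    have C1 : ∑ k ∈ Finset.range (n+2), (-1:ℚ)^k * (n.choose k) * p.eval (k:ℚ) = S1 := by
      rw [Finset.sum_range_succ, hS1]
      simp [Nat.choose_succ_self]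
    have C2 : ∑ k ∈ Finset.range (n+2), (-1:ℚ)^k * (n.choose k) * p.eval (k:ℚ)
        = (∑ k ∈ Finset.range (n+1), (-1:ℚ)^(k+1) * (n.choose (k+1)) * p.eval ((k:ℚ)+1))
          + p.eval 0 := by
      rw [Finset.sum_range_succ' (fun k => (-1:ℚ)^k * (n.choose k) * p.eval (k:ℚ)) (n+1)]
      congr 1
      · refine Finset.sum_congr rfl fun k _ => ?_
        push_cast; ring
      · simp
    have B : ∑ k ∈ Finset.range (n+2), (-1:ℚ)^k * ((n+1).choose k) * p.eval (k:ℚ)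
        = S1 - S2 := by
      rw [Finset.sum_range_succ' (fun k => (-1:ℚ)^k * ((n+1).choose k) * p.eval (k:ℚ)) (n+1)]
      have hterm : ∀ k ∈ Finset.range (n+1),
          (-1:ℚ)^(k+1) * (((n+1).choose (k+1) : ℕ) : ℚ) * p.eval ((k+1 : ℕ) : ℚ)
          = (-1:ℚ)^(k+1) * (n.choose k) * p.eval ((k:ℚ)+1)
            + (-1:ℚ)^(k+1) * (n.choose (k+1)) * p.eval ((k:ℚ)+1) := by
        intro k _
        rw [Nat.choose_succ_succ]
        push_cast; ring
      rw [Finset.sum_congr rfl hterm, Finset.sum_add_distrib]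
      have h4 : ∑ k ∈ Finset.range (n+1), (-1:ℚ)^(k+1) * (n.choose k) * p.eval ((k:ℚ)+1)
          = -S2 := by
        rw [hS2, ← Finset.sum_neg_distrib]
        refine Finset.sum_congr rfl fun k _ => ?_
        ring
      rw [h4]
      have h5 : (-1:ℚ)^0 * (((n+1).choose 0 : ℕ) : ℚ) * p.eval ((0:ℕ):ℚ) = p.eval 0 := by
        simp
      rw [h5]
      rw [C1] at C2
      linarith [C2]
    rw [show n + 1 + 1 = n + 2 from rfl, B, ← A]
    exact ih q hdq

lemma alt_sum_choose_pow (n l : ℕ) (h : l < n) :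
    ∑ k ∈ Finset.range (n+1), (-1:ℚ)^k * (n.choose k) * (k:ℚ)^l = 0 := by
  have := alt_sum_poly n (X^l : Polynomial ℚ)
    (by simpa [Polynomial.degree_X_pow] using (by exact_mod_cast h : (l : WithBot ℕ) < n))
  simpa using this

theorem stmt_2 (n : ℕ) (hn : 1 ≤ n) (N : Fin (n + 1) → ℕ)
    (hN : ∀ l : ℕ, l < n →
      ∑ k : Fin (n + 1), (-1 : ℚ) ^ (k : ℕ) * (N k : ℚ) * ((k : ℕ) : ℚ) ^ l = 0)
    (h0 : 1 ≤ N 0) :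
    (∀ k : Fin (n + 1), N k = N 0 * n.choose (k : ℕ)) ∧ 1 ≤ N (Fin.last n) := by
  set M : Fin (n + 1) → ℚ := fun k => (N k : ℚ) - (N 0 : ℚ) * (n.choose (k : ℕ)) with hM
  have hM0 : M 0 = 0 := by simp [hM]
  have hMsum : ∀ l : ℕ, l < n →
      ∑ k : Fin (n + 1), (-1 : ℚ) ^ (k : ℕ) * M k * ((k : ℕ) : ℚ) ^ l = 0 := by
    intro l hl
    have hb : ∑ k : Fin (n + 1), (-1:ℚ)^(k:ℕ) * (n.choose (k:ℕ)) * ((k:ℕ):ℚ)^l = 0 := by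
      rw [Fin.sum_univ_eq_sum_range (fun i => (-1:ℚ)^i * (n.choose i) * (i:ℚ)^l) (n+1)]
      exact alt_sum_choose_pow n l hl
    have := hN l hl
    calc ∑ k : Fin (n + 1), (-1 : ℚ) ^ (k : ℕ) * M k * ((k : ℕ) : ℚ) ^ l
        = ∑ k : Fin (n + 1), ((-1 : ℚ) ^ (k : ℕ) * (N k : ℚ) * ((k : ℕ) : ℚ) ^ l
            - (N 0 : ℚ) * ((-1:ℚ)^(k:ℕ) * (n.choose (k:ℕ)) * ((k:ℕ):ℚ)^l)) := by
          refine Finset.sum_congr rfl fun k _ => ?_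
          simp only [hM]; ring
      _ = 0 := by
          rw [Finset.sum_sub_distrib, this, ← Finset.mul_sum, hb]
          ring
  set y : Fin n → ℚ := fun j => (-1:ℚ)^((j:ℕ)+1) * M j.succ with hy
  set v : Fin n → ℚ := fun j => ((j:ℕ):ℚ) + 1 with hv
  set V : Matrix (Fin n) (Fin n) ℚ := (Matrix.vandermonde v).transpose with hV
  have hdet : V.det ≠ 0 := by
    rw [hV, Matrix.det_transpose]
    rw [Matrix.det_vandermonde_ne_zero_iff]
    intro i j hij
    have : ((i:ℕ):ℚ) = ((j:ℕ):ℚ) := by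
      simpa [hv] using hij
    exact Fin.ext (by exact_mod_cast this)
  have hmul : V.mulVec y = 0 := by
    funext l
    have h1 := hMsum (l:ℕ) l.isLt
    rw [Fin.sum_univ_succ] at h1
    simp only [hM0] at h1
    have h2 : ∑ j : Fin n, (-1:ℚ)^((j.succ:ℕ)) * M j.succ * ((j.succ:ℕ):ℚ)^(l:ℕ) = 0 := by
      simpa using h1
    show ∑ j, V l j * y j = 0
    rw [← h2]
    refine Finset.sum_congr rfl fun j _ => ?_
    simp only [hV, hy, hv, Matrix.transpose_apply, Matrix.vandermonde_apply, Fin.val_succ]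
    push_cast
    ring
  have hy0 : y = 0 := Matrix.eq_zero_of_mulVec_eq_zero hdet hmul
  have hMz : ∀ k : Fin (n + 1), M k = 0 := by
    intro k
    induction k using Fin.cases with
    | zero => exact hM0
    | succ j =>
      have := congrFun hy0 j
      simp only [hy, Pi.zero_apply] at this
      have hne : (-1:ℚ)^((j:ℕ)+1) ≠ 0 := by
        apply pow_ne_zero; norm_num
      exact (mul_eq_zero.mp this).resolve_left hne
  have hmain : ∀ k : Fin (n + 1), N k = N 0 * n.choose (k : ℕ) := by
    intro k
    have := hMz k
    change (N k : ℚ) - (N 0 : ℚ) * (n.choose (k:ℕ)) = 0 at this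
    have h3 : (N k : ℚ) = (N 0 : ℚ) * (n.choose (k:ℕ)) := by linarith
    exact_mod_cast h3
  refine ⟨hmain, ?_⟩
  have := hmain (Fin.last n)
  simp [Fin.val_last, Nat.choose_self] at this
  omega
end

section
/- Let n ≥ 1, let d, δ : Fin (n+1) → ℚ, and suppose both satisfy ∑_{k=0}^{n} (-1)^k d_k k^i = 0 and ∑_{k=0}^{n} (-1)^k δ_k k^i = 0 for all 0 ≤ i < n − l, where 0 ≤ l < n. If d_k = δ_k for at least l+1 values of k in {0,…,n}, then d_k = δ_k for all k. -/
theorem stmt_5 (n l : ℕ) (hn : 1 ≤ n) (hl : l < n) (d δ : Fin (n + 1) → ℚ)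
    (hd : ∀ i : ℕ, i < n - l →
      ∑ k : Fin (n + 1), (-1 : ℚ) ^ (k : ℕ) * d k * ((k : ℕ) : ℚ) ^ i = 0)
    (hδ : ∀ i : ℕ, i < n - l →
      ∑ k : Fin (n + 1), (-1 : ℚ) ^ (k : ℕ) * δ k * ((k : ℕ) : ℚ) ^ i = 0)
    (hagree : l + 1 ≤ (Finset.univ.filter fun k : Fin (n + 1) => d k = δ k).card) :
    d = δ := by
  set e : Fin (n + 1) → ℚ := fun k => (-1 : ℚ) ^ (k : ℕ) * (d k - δ k) with he
  have hmom : ∀ i : ℕ, i < n - l → ∑ k : Fin (n + 1), e k * ((k : ℕ) : ℚ) ^ i = 0 := by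
    intro i hi
    have h1 := hd i hi
    have h2 := hδ i hi
    have h3 : ∑ k : Fin (n + 1), e k * ((k : ℕ) : ℚ) ^ i
        = (∑ k : Fin (n + 1), (-1 : ℚ) ^ (k : ℕ) * d k * ((k : ℕ) : ℚ) ^ i)
          - ∑ k : Fin (n + 1), (-1 : ℚ) ^ (k : ℕ) * δ k * ((k : ℕ) : ℚ) ^ i := by
      rw [← Finset.sum_sub_distrib]
      exact Finset.sum_congr rfl fun k _ => by simp [he]; ring
    rw [h3, h1, h2, sub_zero]
  set S : Finset (Fin (n + 1)) := Finset.univ.filter fun k => e k ≠ 0 with hS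
  have hScard : S.card ≤ n - l := by
    have hsub : S ⊆ Finset.univ \ (Finset.univ.filter fun k : Fin (n + 1) => d k = δ k) := by
      intro k hk
      simp only [hS, Finset.mem_filter, Finset.mem_univ, true_and] at hk
      simp only [Finset.mem_sdiff, Finset.mem_filter, Finset.mem_univ, true_and]
      intro hdk
      exact hk (by simp [he, hdk])
    have := Finset.card_le_card hsub
    rw [Finset.card_sdiff_of_subset (Finset.subset_univ _)] at this
    simp only [Finset.card_univ, Fintype.card_fin] at this
    omega
  have hezero : ∀ k, e k = 0 := by
    intro k0
    by_contra hk0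
    have hk0S : k0 ∈ S := by simp [hS, hk0]
    set T : Finset (Fin (n + 1)) := S.erase k0 with hT
    have hTcard : T.card + 1 ≤ n - l := by
      have h1 : T.card = S.card - 1 := by rw [hT]; exact Finset.card_erase_of_mem hk0S
      have hpos : 1 ≤ S.card := Finset.card_pos.mpr ⟨k0, hk0S⟩
      omega
    set p : Polynomial ℚ := ∏ j ∈ T, (Polynomial.X - Polynomial.C ((j : ℕ) : ℚ)) with hp
    have hmonic : p.Monic := Polynomial.monic_prod_of_monic _ _ fun j _ => Polynomial.monic_X_sub_C _
    have hdeg : p.natDegree = T.card := by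
      rw [hp, Polynomial.natDegree_prod_of_monic _ _ fun j _ => Polynomial.monic_X_sub_C _,
        Finset.sum_congr rfl fun j _ => Polynomial.natDegree_X_sub_C _]
      simp
    -- the sum against e vanishes
    have hsum0 : ∑ k : Fin (n + 1), e k * p.eval ((k : ℕ) : ℚ) = 0 := by
      have hev : ∀ k : Fin (n + 1), e k * p.eval ((k : ℕ) : ℚ)
          = ∑ i ∈ Finset.range (T.card + 1), p.coeff i * (e k * ((k : ℕ) : ℚ) ^ i) := by
        intro k
        rw [Polynomial.eval_eq_sum_range' (by omega : p.natDegree < T.card + 1),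
          Finset.mul_sum]
        exact Finset.sum_congr rfl fun i _ => by ring
      simp_rw [hev]
      rw [Finset.sum_comm]
      apply Finset.sum_eq_zero
      intro i hi
      rw [← Finset.mul_sum, hmom i (by simp at hi; omega), mul_zero]
    -- but the sum equals e k0 * p.eval x_{k0}
    have hsum1 : ∑ k : Fin (n + 1), e k * p.eval ((k : ℕ) : ℚ)
        = e k0 * p.eval ((k0 : ℕ) : ℚ) := by
      rw [← Finset.sum_subset (Finset.subset_univ S)]
      · rw [← Finset.add_sum_erase _ _ hk0S, ← hT]
        have : ∀ k ∈ T, e k * p.eval ((k : ℕ) : ℚ) = 0 := by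
          intro k hk
          have : p.eval ((k : ℕ) : ℚ) = 0 := by
            rw [hp, Polynomial.eval_prod]
            exact Finset.prod_eq_zero hk (by simp)
          rw [this, mul_zero]
        rw [Finset.sum_eq_zero this, add_zero]
      · intro k _ hk
        simp only [hS, Finset.mem_filter, Finset.mem_univ, true_and, not_not] at hk
        rw [hk, zero_mul]
    have hpev : p.eval ((k0 : ℕ) : ℚ) ≠ 0 := by
      rw [hp, Polynomial.eval_prod]
      apply Finset.prod_ne_zero_iff.mpr
      intro j hj
      have hjne : j ≠ k0 := Finset.ne_of_mem_erase hj
      simp only [Polynomial.eval_sub, Polynomial.eval_X, Polynomial.eval_C, sub_ne_zero]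
      intro h
      have : ((k0 : ℕ) : ℚ) = ((j : ℕ) : ℚ) := h
      exact hjne (Fin.val_injective (Nat.cast_injective this)).symm
    rw [hsum1] at hsum0
    exact hk0 ((mul_eq_zero.mp hsum0).resolve_right hpev)
  funext k
  have := hezero k
  have hne : ((-1 : ℚ) ^ (k : ℕ)) ≠ 0 := by positivity
  have := (mul_eq_zero.mp this).resolve_left hne
  linarith [sub_eq_zero.mp this]
end

section
/- Define the commutative ring R = ℤ[a_1,…,a_n, y] / (a_i·y − a_i², i = 1,…,n). Then R is a free ℤ[y]-module with basis the square-free monomials ∏_{j∈J} a_j over subsets J ⊆ {1,…,n}. -/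
open MvPolynomial

/-- The ideal (aᵢ·y − aᵢ²) in ℤ[a₁,…,aₙ,y], where `some i ↦ aᵢ` and `none ↦ y`. -/
noncomputable def TWideal (n : ℕ) : Ideal (MvPolynomial (Option (Fin n)) ℤ) :=
  Ideal.span (Set.range fun i : Fin n => X (some i) * X none - X (some i) ^ 2)

/-- The ring R = ℤ[a₁,…,aₙ,y]/(aᵢ·y − aᵢ²). -/
noncomputable abbrev TWring (n : ℕ) : Type :=
  MvPolynomial (Option (Fin n)) ℤ ⧸ TWideal n

/-- ℤ[y] acts on R via y ↦ (class of y). -/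
noncomputable instance (n : ℕ) : Algebra (Polynomial ℤ) (TWring n) :=
  ((Polynomial.aeval (Ideal.Quotient.mk (TWideal n) (X none)) :
      Polynomial ℤ →ₐ[ℤ] TWring n)).toRingHom.toAlgebra

/-!
The relations say `aᵢ² = aᵢ y`, so multiplying a square-free monomial `a_K` by `aᵢ` gives either
`a_{K ∪ {i}}` or `y • a_K`; hence the square-free monomials span `R` over `ℤ[y]`. For linear
independence, evaluate at the point `aᵢ = y` for `i ∈ J`, `aᵢ = 0` otherwise: this kills `a_K` unless
`K ⊆ J` and sends `a_J` to the non-zero-divisor `y ^ #J`, so induction on `J` forces every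
coefficient of a vanishing combination to be zero.
-/

namespace TWring

variable {n : ℕ}

noncomputable def sqFreeMonomial (J : Finset (Fin n)) : TWring n :=
  Ideal.Quotient.mk (TWideal n) (∏ j ∈ J, X (some j))

theorem smul_eq_aeval_mul (p : Polynomial ℤ) (x : TWring n) :
    p • x = Polynomial.aeval (Ideal.Quotient.mk (TWideal n) (X none)) p * x :=
  rfl

theorem X_smul (x : TWring n) :
    (Polynomial.X : Polynomial ℤ) • x = Ideal.Quotient.mk (TWideal n) (X none) * x := by
  rw [smul_eq_aeval_mul, Polynomial.aeval_X]

theorem mk_X_some_sq (i : Fin n) :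
    Ideal.Quotient.mk (TWideal n) (X (some i)) ^ 2 =
      Ideal.Quotient.mk (TWideal n) (X (some i)) * Ideal.Quotient.mk (TWideal n) (X none) := by
  rw [← map_pow, ← map_mul, eq_comm, Ideal.Quotient.eq]
  exact Ideal.subset_span ⟨i, rfl⟩

theorem sqFreeMonomial_mul_of_mem {K : Finset (Fin n)} {i : Fin n} (h : i ∈ K) :
    sqFreeMonomial K * Ideal.Quotient.mk (TWideal n) (X (some i)) =
      (Polynomial.X : Polynomial ℤ) • sqFreeMonomial K := by
  rw [X_smul, sqFreeMonomial, ← Finset.mul_prod_erase K _ h, map_mul]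
  linear_combination (Ideal.Quotient.mk (TWideal n) (∏ j ∈ K.erase i, X (some j))) *
    mk_X_some_sq i

theorem sqFreeMonomial_mul_of_notMem {K : Finset (Fin n)} {i : Fin n} (h : i ∉ K) :
    sqFreeMonomial K * Ideal.Quotient.mk (TWideal n) (X (some i)) =
      sqFreeMonomial (insert i K) := by
  rw [sqFreeMonomial, sqFreeMonomial, Finset.prod_insert h, map_mul, mul_comm]

theorem mul_mk_X_mem_span {x : TWring n}
    (hx : x ∈ Submodule.span (Polynomial ℤ) (Set.range sqFreeMonomial)) (i : Option (Fin n)) :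
    x * Ideal.Quotient.mk (TWideal n) (X i) ∈
      Submodule.span (Polynomial ℤ) (Set.range sqFreeMonomial) := by
  induction hx using Submodule.span_induction with
  | mem x hx =>
    obtain ⟨K, rfl⟩ := hx
    have hK : sqFreeMonomial K ∈ Submodule.span (Polynomial ℤ) (Set.range sqFreeMonomial) :=
      Submodule.subset_span (Set.mem_range_self K)
    rcases i with _ | i
    · rw [mul_comm, ← X_smul]
      exact Submodule.smul_mem _ _ hK
    · by_cases h : i ∈ K
      · rw [sqFreeMonomial_mul_of_mem h]
        exact Submodule.smul_mem _ _ hK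
      · rw [sqFreeMonomial_mul_of_notMem h]
        exact Submodule.subset_span (Set.mem_range_self _)
  | zero => simp
  | add x y _ _ hx hy => rw [add_mul]; exact add_mem hx hy
  | smul p x _ hx => rw [smul_mul_assoc]; exact Submodule.smul_mem _ _ hx

theorem span_sqFreeMonomial :
    Submodule.span (Polynomial ℤ) (Set.range (sqFreeMonomial (n := n))) = ⊤ := by
  refine Submodule.eq_top_iff'.mpr fun x => ?_
  obtain ⟨p, rfl⟩ := Ideal.Quotient.mk_surjective x
  induction p using MvPolynomial.induction_on with
  | C a =>
    have h : Ideal.Quotient.mk (TWideal n) (C a) = Polynomial.C a • sqFreeMonomial ∅ := by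
      simp [smul_eq_aeval_mul, sqFreeMonomial, eq_intCast]
    rw [h]
    exact Submodule.smul_mem _ _ (Submodule.subset_span (Set.mem_range_self _))
  | add p q hp hq => rw [map_add]; exact add_mem hp hq
  | mul_X p i hp => rw [map_mul]; exact mul_mk_X_mem_span hp i

noncomputable def evalPoint (J : Finset (Fin n)) : Option (Fin n) → Polynomial ℤ :=
  fun i => i.elim Polynomial.X fun j => if j ∈ J then Polynomial.X else 0

noncomputable def evalAt (J : Finset (Fin n)) : TWring n →ₐ[ℤ] Polynomial ℤ :=
  Ideal.Quotient.liftₐ (TWideal n) (aeval (evalPoint J)) fun p hp => by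
    refine (Ideal.span_le (I := RingHom.ker (aeval (evalPoint J)))).mpr ?_ hp
    rintro _ ⟨i, rfl⟩
    by_cases h : i ∈ J <;> simp [evalPoint, h, sq]

theorem evalAt_mk (J : Finset (Fin n)) (p : MvPolynomial (Option (Fin n)) ℤ) :
    evalAt J (Ideal.Quotient.mk (TWideal n) p) = aeval (evalPoint J) p :=
  rfl

theorem evalAt_smul (J : Finset (Fin n)) (p : Polynomial ℤ) (x : TWring n) :
    evalAt J (p • x) = p * evalAt J x := by
  rw [smul_eq_aeval_mul, map_mul, ← Polynomial.aeval_algHom_apply, evalAt_mk]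
  simp [evalPoint]

theorem evalAt_sqFreeMonomial (J K : Finset (Fin n)) :
    evalAt J (sqFreeMonomial K) = if K ⊆ J then Polynomial.X ^ K.card else 0 := by
  rw [sqFreeMonomial, evalAt_mk, map_prod]
  split_ifs with h
  · rw [Finset.prod_congr rfl (g := fun _ => Polynomial.X) fun k hk => by simp [evalPoint, h hk],
      Finset.prod_const]
  · obtain ⟨k, hkK, hkJ⟩ := Finset.not_subset.mp h
    exact Finset.prod_eq_zero hkK (by simp [evalPoint, hkJ])

theorem linearIndependent_sqFreeMonomial :
    LinearIndependent (Polynomial ℤ) (sqFreeMonomial (n := n)) := by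
  refine Fintype.linearIndependent_iff.mpr fun c hc J => ?_
  induction J using Finset.strongInduction with
  | H J ih =>
    have hJ := congrArg (evalAt J) hc
    simp only [map_sum, evalAt_smul, evalAt_sqFreeMonomial, map_zero] at hJ
    rw [Finset.sum_eq_single J (fun K _ hKJ => ?_) (by simp), if_pos subset_rfl] at hJ
    · exact (mul_eq_zero.mp hJ).resolve_right (pow_ne_zero _ Polynomial.X_ne_zero)
    · split_ifs with hK
      · rw [ih K (hK.ssubset_of_ne hKJ), zero_mul]
      · rw [mul_zero]

end TWring

theorem stmt_10 (n : ℕ) :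
    ∃ b : Module.Basis (Finset (Fin n)) (Polynomial ℤ) (TWring n),
      ∀ J : Finset (Fin n),
        b J = Ideal.Quotient.mk (TWideal n) (∏ j ∈ J, X (some j)) :=
  ⟨.mk TWring.linearIndependent_sqFreeMonomial TWring.span_sqFreeMonomial.ge,
    Module.Basis.mk_apply _ _⟩
end

section
/- The ring homomorphism Φ : ℤ[a_1,…,a_n,y]/(a_i y − a_i²) → ∏_{J'⊆{1,…,n}} ℤ[x] given by the collection of all evaluations φ_{J'} (y ↦ x, a_i ↦ x if i∈J', else 0) is injective. -/
open MvPolynomial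

namespace TWaux

variable {n : ℕ}

noncomputable def A (i : Fin n) : TWring n := Ideal.Quotient.mk (TWideal n) (X (some i))
noncomputable def Y : TWring n := Ideal.Quotient.mk (TWideal n) (X none)

noncomputable def b (p : Finset (Fin n) × ℕ) : TWring n :=
  (∏ i ∈ p.1, A i) * (if h : p.1.Nonempty then A (p.1.min' h) ^ p.2 else Y ^ p.2)

lemma AY (i : Fin n) : A i * Y = A i ^ 2 := by
  have hmem : (X (some i) * X none - X (some i) ^ 2 : MvPolynomial (Option (Fin n)) ℤ)
      ∈ TWideal n := Ideal.subset_span ⟨i, rfl⟩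
  have h := (Ideal.Quotient.eq (I := TWideal n)).mpr hmem
  simpa [A, Y] using h

lemma AYpow (i : Fin n) : ∀ m : ℕ, A i * Y ^ m = A i ^ (m + 1)
  | 0 => by simp
  | m + 1 => by
    calc A i * Y ^ (m + 1) = (A i * Y) * Y ^ m := by ring
    _ = A i ^ 2 * Y ^ m := by rw [AY]
    _ = A i * (A i * Y ^ m) := by ring
    _ = A i * A i ^ (m + 1) := by rw [AYpow i m]
    _ = A i ^ (m + 1 + 1) := by ring

lemma prod_eq_b (S : Finset (Fin n)) (e : Fin n → ℕ) (he : ∀ i ∈ S, 1 ≤ e i) (m : ℕ) :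
    (∏ i ∈ S, A i ^ e i) * Y ^ m = b (S, (∑ i ∈ S, (e i - 1)) + m) := by
  rcases S.eq_empty_or_nonempty with rfl | hS
  · simp [b]
  · have hi₀ : S.min' hS ∈ S := S.min'_mem hS
    set i₀ := S.min' hS with hi0def
    have h1 : ∀ i ∈ S, A i ^ e i = A i * Y ^ (e i - 1) := by
      intro i hi
      rw [AYpow]
      congr 1
      have := he i hi
      omega
    set M : ℕ := (∑ i ∈ S, (e i - 1)) + m with hM
    calc (∏ i ∈ S, A i ^ e i) * Y ^ m
        = (∏ i ∈ S, A i * Y ^ (e i - 1)) * Y ^ m := by rw [Finset.prod_congr rfl h1]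
      _ = ((∏ i ∈ S, A i) * ∏ i ∈ S, Y ^ (e i - 1)) * Y ^ m := by rw [Finset.prod_mul_distrib]
      _ = (∏ i ∈ S, A i) * Y ^ M := by
          rw [Finset.prod_pow_eq_pow_sum, hM, pow_add]; ring
      _ = (∏ i ∈ S.erase i₀, A i) * (A i₀ * Y ^ M) := by
          rw [← Finset.mul_prod_erase S A hi₀]; ring
      _ = (∏ i ∈ S.erase i₀, A i) * (A i₀ * A i₀ ^ M) := by rw [AYpow, pow_succ']
      _ = (∏ i ∈ S, A i) * A i₀ ^ M := by rw [← Finset.mul_prod_erase S A hi₀]; ring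
      _ = b (S, M) := by rw [b, dif_pos hS]

lemma mk_monomial_eq (d : Option (Fin n) →₀ ℕ) :
    ∃ p, Ideal.Quotient.mk (TWideal n) (monomial d 1) = b p := by
  classical
  set S : Finset (Fin n) := Finset.univ.filter (fun i => d (some i) ≠ 0) with hSdef
  refine ⟨(S, (∑ i ∈ S, (d (some i) - 1)) + d none), ?_⟩
  have h1 : (monomial d (1:ℤ)) = ∏ j ∈ d.support, X j ^ d j := by
    rw [monomial_eq]
    simp [Finsupp.prod]
  have h2 : Ideal.Quotient.mk (TWideal n) (monomial d 1)
      = ∏ j ∈ d.support, (Ideal.Quotient.mk (TWideal n) (X j)) ^ d j := by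
    rw [h1, map_prod]
    simp
  rw [h2]
  have h3 : ∏ j ∈ d.support, (Ideal.Quotient.mk (TWideal n) (X j)) ^ d j
      = ∏ j : Option (Fin n), (Ideal.Quotient.mk (TWideal n) (X j)) ^ d j := by
    apply Finset.prod_subset (Finset.subset_univ _)
    intro j _ hj
    rw [Finsupp.notMem_support_iff.mp hj, pow_zero]
  rw [h3, Fintype.prod_option]
  have h4 : ∏ i : Fin n, (Ideal.Quotient.mk (TWideal n) (X (some i))) ^ d (some i)
      = ∏ i ∈ S, A i ^ d (some i) := by
    symm
    apply Finset.prod_subset (Finset.subset_univ _)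
    intro i _ hi
    have : d (some i) = 0 := by
      by_contra h
      exact hi (by simp [hSdef, h])
    rw [this, pow_zero]
  rw [h4]
  rw [mul_comm]
  have he : ∀ i ∈ S, 1 ≤ d (some i) := by
    intro i hi
    have : d (some i) ≠ 0 := by simpa [hSdef] using hi
    omega
  exact prod_eq_b S (fun i => d (some i)) he (d none)

lemma span_b_top : Submodule.span ℤ (Set.range (b (n := n))) = ⊤ := by
  rw [eq_top_iff]
  rintro z -
  obtain ⟨p, rfl⟩ := Ideal.Quotient.mk_surjective z
  rw [← p.support_sum_monomial_coeff, map_sum]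
  apply Submodule.sum_mem
  intro d _
  have h1 : (monomial d (coeff d p)) = (coeff d p) • (monomial d (1:ℤ)) := by
    rw [smul_monomial]
    simp
  rw [h1, map_zsmul]
  refine Submodule.smul_mem _ _ (Submodule.subset_span ?_)
  obtain ⟨q, hq⟩ := mk_monomial_eq d
  exact ⟨q, hq.symm⟩

end TWaux

namespace TWaux

variable {n : ℕ} (Φ : TWring n →+* (Finset (Fin n) → Polynomial ℤ))
  (hy : Φ (Ideal.Quotient.mk (TWideal n) (X none)) = fun _ => Polynomial.X)
  (ha : ∀ i : Fin n, Φ (Ideal.Quotient.mk (TWideal n) (X (some i))) =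
    fun J' => if i ∈ J' then Polynomial.X else 0)

include hy ha in
lemma Phi_b (p : Finset (Fin n) × ℕ) :
    Φ (b p) = fun J => if p.1 ⊆ J then Polynomial.X ^ (p.1.card + p.2) else 0 := by
  obtain ⟨S, m⟩ := p
  have hA : ∀ (i : Fin n) (J : Finset (Fin n)),
      Φ (A i) J = if i ∈ J then Polynomial.X else 0 := by
    intro i J
    have := congrFun (ha i) J
    simpa [A] using this
  have hY : ∀ J, Φ (Y (n := n)) J = Polynomial.X := by
    intro J
    have := congrFun hy J
    simpa [Y] using this
  have hprod : ∀ J, Φ (∏ i ∈ S, A i) J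
      = if S ⊆ J then Polynomial.X ^ S.card else 0 := by
    intro J
    rw [map_prod, Finset.prod_apply]
    by_cases hSJ : S ⊆ J
    · rw [if_pos hSJ]
      have hfac : ∀ i ∈ S, Φ (A i) J = Polynomial.X := by
        intro i hi
        rw [hA i J, if_pos (hSJ hi)]
      rw [Finset.prod_congr rfl hfac, Finset.prod_const]
    · rw [if_neg hSJ]
      obtain ⟨i, hiS, hiJ⟩ := Finset.not_subset.mp hSJ
      exact Finset.prod_eq_zero hiS (by rw [hA i J, if_neg hiJ])
  have hw : ∀ J, S ⊆ J →
      Φ (if h : S.Nonempty then A (S.min' h) ^ m else Y ^ m) J = Polynomial.X ^ m := by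
    intro J hSJ
    by_cases hS : S.Nonempty
    · rw [dif_pos hS, map_pow, Pi.pow_apply, hA, if_pos (hSJ (S.min'_mem hS))]
    · rw [dif_neg hS, map_pow, Pi.pow_apply, hY]
  funext J
  rw [show b (S, m) = (∏ i ∈ S, A i) *
    (if h : S.Nonempty then A (S.min' h) ^ m else Y ^ m) from rfl]
  rw [map_mul, Pi.mul_apply, hprod J]
  by_cases hSJ : S ⊆ J
  · rw [if_pos hSJ, hw J hSJ, ← pow_add]
    simp [hSJ]
  · rw [if_neg hSJ, zero_mul]
    simp [hSJ]

end TWaux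

theorem stmt_18 (n : ℕ)
    (Φ : TWring n →+* (Finset (Fin n) → Polynomial ℤ))
    (hy : Φ (Ideal.Quotient.mk (TWideal n) (X none)) = fun _ => Polynomial.X)
    (ha : ∀ i : Fin n, Φ (Ideal.Quotient.mk (TWideal n) (X (some i))) =
      fun J' => if i ∈ J' then Polynomial.X else 0) :
    Function.Injective Φ := by
  rw [injective_iff_map_eq_zero]
  intro z hz
  have hz' : z ∈ Submodule.span ℤ (Set.range (TWaux.b (n := n))) := by
    rw [TWaux.span_b_top]; trivial
  rw [Finsupp.mem_span_range_iff_exists_finsupp] at hz'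
  obtain ⟨c, hc⟩ := hz'
  have hΦsum : ∑ p ∈ c.support, c p • Φ (TWaux.b p) = 0 := by
    rw [← hz, ← hc, Finsupp.sum, map_sum]
    exact Finset.sum_congr rfl fun p _ => (map_zsmul Φ _ _).symm
  have hcoeff : ∀ (J : Finset (Fin n)) (k : ℕ),
      ∑ p ∈ c.support, c p * (if p.1 ⊆ J ∧ p.1.card + p.2 = k then 1 else 0) = 0 := by
    intro J k
    have h1 := congrFun hΦsum J
    rw [Finset.sum_apply, Pi.zero_apply] at h1
    have h2 : ∑ p ∈ c.support,
        c p • (if p.1 ⊆ J then (Polynomial.X : Polynomial ℤ) ^ (p.1.card + p.2) else 0)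
        = 0 := by
      refine Eq.trans (Finset.sum_congr rfl fun p _ => ?_) h1
      have hb := congrFun (TWaux.Phi_b Φ hy ha p) J
      simp only [Pi.smul_apply, hb]
    have h3 := congrArg (fun q : Polynomial ℤ => q.coeff k) h2
    simp only [Polynomial.finset_sum_coeff, Polynomial.coeff_smul, Polynomial.coeff_zero,
      smul_eq_mul] at h3
    refine Eq.trans (Finset.sum_congr rfl fun p _ => ?_) h3
    congr 1
    by_cases hsub : p.1 ⊆ J
    · rw [if_pos hsub, Polynomial.coeff_X_pow]
      by_cases hdeg : p.1.card + p.2 = k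
      · rw [if_pos ⟨hsub, hdeg⟩, if_pos hdeg.symm]
      · rw [if_neg (by tauto), if_neg (fun h => hdeg h.symm)]
    · rw [if_neg (by tauto), if_neg hsub, Polynomial.coeff_zero]
  have key : ∀ S : Finset (Fin n), ∀ m : ℕ, c (S, m) = 0 := by
    intro S
    induction S using Finset.strongInduction with
    | _ S ih =>
      intro m
      have h := hcoeff S (S.card + m)
      rw [Finset.sum_eq_single (S, m)] at h
      · simpa using h
      · intro p hp hne
        by_cases hind : p.1 ⊆ S ∧ p.1.card + p.2 = S.card + m
        · exfalso
          by_cases heq : p.1 = S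
          · apply hne
            have h2 : p.2 = m := by
              have := hind.2
              rw [heq] at this
              omega
            exact Prod.ext heq h2
          · have hss : p.1 ⊂ S := Finset.ssubset_iff_subset_ne.mpr ⟨hind.1, heq⟩
            exact Finsupp.mem_support_iff.mp hp (ih p.1 hss p.2)
        · rw [if_neg hind, mul_zero]
      · intro hmem
        rw [Finsupp.notMem_support_iff.mp hmem, zero_mul]
  have hc0 : c = 0 := Finsupp.ext fun p => key p.1 p.2
  rw [← hc, hc0, Finsupp.sum_zero_index]
end
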